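/- Every finite simple graph G whose order n satisfies 1 < n < 9 has χᵢ(G) + χᵢ(Ḡ) < 2n. -/

import Mathlib

open SimpleGraph Finset

/-- The graph on the vertices of `G` where two distinct vertices are adjacent
iff they have a common neighbor in `G`. -/
def commonNbrGraph {V : Type*} (G : SimpleGraph V) : SimpleGraph V where
  Adj u v := u ≠ v ∧ ∃ w, G.Adj u w ∧ G.Adj v w
  symm := by
    constructor
    rintro u v ⟨huv, w, h1, h2⟩
    exact ⟨huv.symm, w, h2, h1⟩
  loopless := by
    constructor
    rintro v ⟨hv, -⟩
    exact hv rfl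

/-- The injective chromatic number of `G`. -/
noncomputable def chiInj {V : Type*} (G : SimpleGraph V) : ℕ∞ :=
  (commonNbrGraph G).chromaticNumber

/-!
If `commonNbrGraph G` is not complete, two non-adjacent vertices of it can share a colour, so
`chiInj G < n`; since always `chiInj ≤ n`, it suffices that for `2 ≤ n ≤ 8` the graphs `G`
and `Gᶜ` cannot both have the property that any two vertices have a common neighbour.

Under that property for both, every vertex has degree at least 3 in `G` and in `Gᶜ`, so
`n ≥ 7`, and `n = 7` would make `G` cubic of odd order. For `n = 8` all degrees are 3 or 4. The
neighbourhoods of the neighbours of a degree-3 vertex cover the other seven vertices with an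
overlap, so it has two neighbours of degree 4; applied to `G` and `Gᶜ`, double counting the edges
between the set `T` of degree-3 vertices and its complement forces `#T = 4`, with every vertex of
`T` having one neighbour in `T` and two outside, and every vertex outside having at most two in
`T`. Then a vertex of `T` cannot share a neighbour with each of the other three.
-/

section

variable {V : Type*} {G : SimpleGraph V}

lemma chiInj_lt_card_of_commonNbrGraph_ne_top [Fintype V] (h : commonNbrGraph G ≠ ⊤) :
    chiInj G < Fintype.card V :=
  chromaticNumber_le_card.lt_of_ne (mt chromaticNumber_eq_card_iff.mp h)

lemma exists_adj_adj_of_commonNbrGraph_eq_top (h : commonNbrGraph G = ⊤) {u v : V}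
    (huv : u ≠ v) : ∃ w, G.Adj u w ∧ G.Adj v w :=
  (show (commonNbrGraph G).Adj u v by rw [h]; exact huv).2

variable [DecidableEq V] [DecidableRel G.Adj]

lemma card_filter_adj_add_card_filter_compl_adj {v : V} {s : Finset V} (hv : v ∉ s) :
    #{w ∈ s | G.Adj v w} + #{w ∈ s | Gᶜ.Adj v w} = #s := by
  have : {w ∈ s | Gᶜ.Adj v w} = {w ∈ s | ¬G.Adj v w} :=
    filter_congr fun w hw ↦ by rw [compl_adj, and_iff_right (ne_of_mem_of_not_mem hw hv).symm]
  rw [this, card_filter_add_card_filter_not]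

variable [Fintype V]

lemma card_filter_adj_add_card_filter_adj_compl_eq_degree (v : V) (s : Finset V) :
    #{w ∈ s | G.Adj v w} + #{w ∈ sᶜ | G.Adj v w} = G.degree v := by
  rw [← card_union_of_disjoint (disjoint_filter_filter disjoint_compl_right), ← filter_union,
    union_compl, ← neighborFinset_eq_filter, card_neighborFinset_eq_degree]

lemma three_le_degree_of_commonNbrGraph_eq_top [Nontrivial V] (hG : commonNbrGraph G = ⊤)
    (hGc : commonNbrGraph Gᶜ = ⊤) (v : V) : 3 ≤ G.degree v := by
  by_contra! hlt
  obtain ⟨u, hu⟩ := exists_ne v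
  obtain ⟨a, hva, -⟩ := exists_adj_adj_of_commonNbrGraph_eq_top hG hu.symm
  obtain ⟨b, hvb, hab⟩ := exists_adj_adj_of_commonNbrGraph_eq_top hG hva.ne
  have hN : G.neighborFinset v = {a, b} := by
    refine (eq_of_subset_of_card_le ?_ ?_).symm
    · simp [insert_subset_iff, hva, hvb]
    · rw [card_neighborFinset_eq_degree, card_pair hab.ne]; omega
  obtain ⟨w, hwa, hwb⟩ := exists_adj_adj_of_commonNbrGraph_eq_top hGc hab.ne
  rw [compl_adj] at hwa hwb
  have hvw : v ≠ w := by rintro rfl; exact hwa.2 hva.symm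
  obtain ⟨z, hvz, hwz⟩ := exists_adj_adj_of_commonNbrGraph_eq_top hG hvw
  have hz : z ∈ G.neighborFinset v := (mem_neighborFinset _ _ _).mpr hvz
  rw [hN, mem_insert, mem_singleton] at hz
  rcases hz with rfl | rfl
  · exact hwa.2 hwz.symm
  · exact hwb.2 hwz.symm

lemma exists_adj_one_lt_card_filter_adj (hG : commonNbrGraph G = ⊤) {v : V}
    (hv : G.degree v = 3) : ∃ u, G.Adj v u ∧ 1 < #{w ∈ G.neighborFinset v | G.Adj w u} := by
  set N := G.neighborFinset v
  have hcover : ∀ x ∈ N, ∃ y ∈ N, G.Adj y x := fun x hx ↦ by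
    obtain ⟨y, hvy, hxy⟩ :=
      exists_adj_adj_of_commonNbrGraph_eq_top hG (G.ne_of_adj ((mem_neighborFinset _ _ _).mp hx))
    exact ⟨y, (mem_neighborFinset _ _ _).mpr hvy, hxy.symm⟩
  have hN : #N = 3 := by rw [card_neighborFinset_eq_degree, hv]
  obtain ⟨a, ha⟩ : N.Nonempty := card_pos.mp (by omega)
  obtain ⟨b, hb, hba⟩ := hcover a ha
  obtain ⟨c, hc, hcab⟩ : ∃ c ∈ N, c ∉ ({a, b} : Finset V) :=
    exists_mem_notMem_of_card_lt_card (by rw [hN]; exact card_le_two.trans_lt (by norm_num))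
  obtain ⟨x, hx, hxc⟩ := hcover c hc
  -- `x` is adjacent to `c` and to whichever of `a`, `b` it is not
  refine ⟨x, (mem_neighborFinset _ _ _).mp hx, one_lt_card.mpr ?_⟩
  simp only [mem_insert, mem_singleton, not_or] at hcab
  have hxab : x = a ∨ x = b := by
    by_contra! hx'
    have hsub : ({x, a, b, c} : Finset V) ⊆ N := by simp [insert_subset_iff, *]
    have := card_le_card hsub
    rw [card_insert_of_notMem (by simp [hx', hxc.ne]), card_insert_of_notMem (by simp [hba.ne',
      Ne.symm hcab.1]), card_pair (Ne.symm hcab.2)] at this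
    omega
  rcases hxab with rfl | rfl
  · exact ⟨b, mem_filter.mpr ⟨hb, hba⟩, c, mem_filter.mpr ⟨hc, hxc.symm⟩, Ne.symm hcab.2⟩
  · exact ⟨a, mem_filter.mpr ⟨ha, hba.symm⟩, c, mem_filter.mpr ⟨hc, hxc.symm⟩, Ne.symm hcab.1⟩

lemma card_le_sum_degree_sub_one (hG : commonNbrGraph G = ⊤) {v : V} (hv : G.degree v = 3) :
    Fintype.card V ≤ ∑ w ∈ G.neighborFinset v, (G.degree w - 1) := by
  have hterm : ∀ w ∈ G.neighborFinset v, G.degree w - 1 = #{u ∈ univ.erase v | G.Adj w u} := by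
    intro w hw
    rw [filter_erase, ← neighborFinset_eq_filter, card_erase_of_mem, card_neighborFinset_eq_degree]
    exact (mem_neighborFinset _ _ _).mpr ((mem_neighborFinset _ _ _).mp hw).symm
  have hcover : ∀ u ∈ univ.erase v, 1 ≤ #{w ∈ G.neighborFinset v | G.Adj w u} := by
    intro u hu
    obtain ⟨w, hvw, huw⟩ := exists_adj_adj_of_commonNbrGraph_eq_top hG (ne_of_mem_erase hu).symm
    exact one_le_card.mpr ⟨w, mem_filter.mpr ⟨(mem_neighborFinset _ _ _).mpr hvw, huw.symm⟩⟩
  -- count the pairs `(w, u)` with `w ~ v`, `w ~ u`, `u ≠ v`: every `u ≠ v` occurs, one twice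
  obtain ⟨u, hvu, hu⟩ := exists_adj_one_lt_card_filter_adj hG hv
  have hlt := sum_lt_sum hcover ⟨u, mem_erase.mpr ⟨hvu.ne', mem_univ u⟩, hu⟩
  have hdouble : ∑ w ∈ G.neighborFinset v, #{u ∈ univ.erase v | G.Adj w u} =
      ∑ u ∈ univ.erase v, #{w ∈ G.neighborFinset v | G.Adj w u} :=
    sum_card_bipartiteAbove_eq_sum_card_bipartiteBelow G.Adj
  rw [sum_const, smul_eq_mul, mul_one, card_erase_of_mem (mem_univ v), card_univ] at hlt
  rw [sum_congr rfl hterm, hdouble]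
  exact Nat.le_of_pred_lt hlt

lemma card_le_six_add_card_filter_degree_eq_four (hG : commonNbrGraph G = ⊤)
    (hdeg : ∀ w, G.degree w ≤ 4) {v : V} (hv : G.degree v = 3) :
    Fintype.card V ≤ 6 + #{w ∈ G.neighborFinset v | G.degree w = 4} := by
  calc Fintype.card V ≤ ∑ w ∈ G.neighborFinset v, (G.degree w - 1) :=
        card_le_sum_degree_sub_one hG hv
    _ ≤ ∑ w ∈ G.neighborFinset v, (2 + if G.degree w = 4 then 1 else 0) :=
        sum_le_sum fun w _ ↦ by have := hdeg w; split_ifs <;> omega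
    _ = 6 + #{w ∈ G.neighborFinset v | G.degree w = 4} := by
        rw [sum_add_distrib, sum_const, card_neighborFinset_eq_degree, hv, sum_boole]; rfl

lemma card_erase_le_sum_card_filter_adj (hG : commonNbrGraph G = ⊤) (v : V) (s : Finset V) :
    #(s.erase v) ≤ ∑ w ∈ G.neighborFinset v, #{u ∈ s.erase v | G.Adj w u} := by
  refine (card_le_card fun u hu ↦ ?_).trans card_biUnion_le
  obtain ⟨w, hvw, huw⟩ := exists_adj_adj_of_commonNbrGraph_eq_top hG (ne_of_mem_erase hu).symm
  exact mem_biUnion.mpr ⟨w, (mem_neighborFinset _ _ _).mpr hvw, mem_filter.mpr ⟨hu, huw.symm⟩⟩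

lemma card_le_three_of_commonNbrGraph_eq_top (hG : commonNbrGraph G = ⊤) (s : Finset V)
    (hin : ∀ t ∈ s, #{w ∈ s | G.Adj t w} ≤ 1) (hout : ∀ t ∈ s, #{w ∈ sᶜ | G.Adj t w} ≤ 2)
    (hback : ∀ d ∉ s, #{w ∈ s | G.Adj d w} ≤ 2) : #s ≤ 3 := by
  obtain rfl | ⟨t, ht⟩ := s.eq_empty_or_nonempty
  · simp
  -- every other vertex of `s` shares a neighbour with `t`, but each neighbour of `t` reaches at
  -- most one of them besides `t`, and only those outside `s` reach any
  have hterm : ∀ w ∈ G.neighborFinset t,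
      #{u ∈ s.erase t | G.Adj w u} ≤ if w ∉ s then 1 else 0 := by
    intro w hw
    have htw : t ∈ {u ∈ s | G.Adj w u} :=
      mem_filter.mpr ⟨ht, ((mem_neighborFinset _ _ _).mp hw).symm⟩
    rw [filter_erase, card_erase_of_mem htw]
    split_ifs with hws
    · have := hin w hws; omega
    · have := hback w hws; omega
  have hnbr : {w ∈ G.neighborFinset t | w ∉ s} = {w ∈ sᶜ | G.Adj t w} := by
    ext w; simp [and_comm]
  have := calc #(s.erase t)
      _ ≤ ∑ w ∈ G.neighborFinset t, #{u ∈ s.erase t | G.Adj w u} :=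
        card_erase_le_sum_card_filter_adj hG t s
      _ ≤ ∑ w ∈ G.neighborFinset t, if w ∉ s then 1 else 0 := sum_le_sum hterm
      _ ≤ 2 := by rw [sum_boole, hnbr]; exact_mod_cast hout t ht
  rw [card_erase_of_mem ht] at this
  omega

lemma card_eq_four_and_card_filter_adj_eq_two (h8 : Fintype.card V = 8) (T : Finset V)
    (hlow : ∀ t ∈ T, 2 ≤ #{d ∈ Tᶜ | G.Adj t d}) (hup : ∀ d ∈ Tᶜ, #{t ∈ T | G.Adj d t} + 2 ≤ #T) :
    #T = 4 ∧ ∀ t ∈ T, #{d ∈ Tᶜ | G.Adj t d} = 2 := by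
  have hup' : ∀ d ∈ Tᶜ, #{t ∈ T | G.Adj t d} ≤ #T - 2 := fun d hd ↦ by
    have hsym : {t ∈ T | G.Adj t d} = {t ∈ T | G.Adj d t} :=
      filter_congr fun t _ ↦ G.adj_comm t d
    have := hup d hd
    rw [hsym]
    omega
  -- `hup'` alone says nothing when `#T < 2`, as `#T - 2` truncates
  have hT2 : 2 ≤ #T := by
    by_contra! h
    obtain ⟨d, hd⟩ : Tᶜ.Nonempty := card_pos.mp (by rw [card_compl, h8]; omega)
    have := hup d hd
    omega
  have hcount := card_nsmul_le_card_nsmul G.Adj hlow hup'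
  rw [card_compl, h8, smul_eq_mul, smul_eq_mul] at hcount
  have hT4 : #T = 4 := by
    have : #T ≤ 8 := h8 ▸ card_le_univ T
    interval_cases #T <;> omega
  have hsum := calc ∑ t ∈ T, #{d ∈ Tᶜ | G.Adj t d}
      _ = ∑ d ∈ Tᶜ, #{t ∈ T | G.Adj t d} :=
        sum_card_bipartiteAbove_eq_sum_card_bipartiteBelow G.Adj
      _ ≤ ∑ d ∈ Tᶜ, (#T - 2) := sum_le_sum hup'
      _ = ∑ t ∈ T, 2 := by simp [card_compl, h8, hT4]
  exact ⟨hT4, fun t ht ↦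
    ((sum_eq_sum_iff_of_le hlow).mp (le_antisymm (sum_le_sum hlow) hsum) t ht).symm⟩

lemma false_of_card_eq_eight (hG : commonNbrGraph G = ⊤) (hGc : commonNbrGraph Gᶜ = ⊤)
    (h8 : Fintype.card V = 8) (hdeg : ∀ v, G.degree v = 3 ∨ G.degree v = 4) : False := by
  set T : Finset V := {v | G.degree v = 3}
  have hT : ∀ v, v ∈ T ↔ G.degree v = 3 := by simp [T]
  have hTc : ∀ v, v ∈ Tᶜ ↔ G.degree v = 4 := fun v ↦ by rw [mem_compl, hT]; have := hdeg v; omega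
  have hdegc : ∀ v, Gᶜ.degree v = 7 - G.degree v := fun v ↦ by rw [degree_compl, h8]
  have hlow : ∀ t ∈ T, 2 ≤ #{d ∈ Tᶜ | G.Adj t d} := by
    intro t ht
    have := card_le_six_add_card_filter_degree_eq_four hG (fun w ↦ by have := hdeg w; omega)
      ((hT t).mp ht)
    have hsub : {w ∈ G.neighborFinset t | G.degree w = 4} ⊆ {d ∈ Tᶜ | G.Adj t d} :=
      fun w hw ↦ by
        simp only [mem_filter, mem_neighborFinset, hTc] at hw ⊢
        exact hw.symm
    have := card_le_card hsub
    omega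
  have hup : ∀ d ∈ Tᶜ, #{t ∈ T | G.Adj d t} + 2 ≤ #T := by
    intro d hd
    have := card_le_six_add_card_filter_degree_eq_four hGc
      (fun w ↦ by have := hdeg w; have := hdegc w; omega) (by rw [hdegc, (hTc d).mp hd])
    have hsub : {w ∈ Gᶜ.neighborFinset d | Gᶜ.degree w = 4} ⊆ {t ∈ T | Gᶜ.Adj d t} :=
      fun w hw ↦ by
        simp only [mem_filter, mem_neighborFinset, hdegc, hT] at hw ⊢
        exact ⟨by omega, hw.1⟩
    have := card_le_card hsub
    have := card_filter_adj_add_card_filter_compl_adj (G := G) (mem_compl.mp hd)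
    omega
  obtain ⟨hT4, hexact⟩ := card_eq_four_and_card_filter_adj_eq_two h8 T hlow hup
  have hin : ∀ t ∈ T, #{w ∈ T | G.Adj t w} ≤ 1 := by
    intro t ht
    have := card_filter_adj_add_card_filter_adj_compl_eq_degree (G := G) t T
    rw [(hT t).mp ht, hexact t ht] at this
    omega
  have := card_le_three_of_commonNbrGraph_eq_top hG T hin (fun t ht ↦ (hexact t ht).le)
    fun d hd ↦ by have := hup d (mem_compl.mpr hd); omega
  omega

end

lemma not_commonNbrGraph_eq_top_and_compl {V : Type*} [Fintype V] (G : SimpleGraph V)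
    (h1 : 1 < Fintype.card V) (h2 : Fintype.card V < 9) :
    ¬(commonNbrGraph G = ⊤ ∧ commonNbrGraph Gᶜ = ⊤) := by
  classical
  rintro ⟨hG, hGc⟩
  have : Nontrivial V := Fintype.one_lt_card_iff_nontrivial.mp h1
  have hGcc : commonNbrGraph Gᶜᶜ = ⊤ := by rwa [compl_compl]
  have hdeg : ∀ v, 3 ≤ G.degree v ∧ 3 ≤ Fintype.card V - 1 - G.degree v := fun v ↦
    ⟨three_le_degree_of_commonNbrGraph_eq_top hG hGc v,
      degree_compl G v ▸ three_le_degree_of_commonNbrGraph_eq_top hGc hGcc v⟩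
  obtain ⟨v⟩ := this.to_nonempty
  have := hdeg v
  obtain h7 | h8 : Fintype.card V = 7 ∨ Fintype.card V = 8 := by omega
  · -- `G` would be a cubic graph on an odd number of vertices
    have hsum := G.sum_degrees_eq_twice_card_edges
    rw [sum_congr rfl fun v _ ↦ (by have := hdeg v; omega : G.degree v = 3), sum_const,
      card_univ, h7, smul_eq_mul] at hsum
    omega
  · exact false_of_card_eq_eight hG hGc h8 fun v ↦ by have := hdeg v; omega

theorem chiInj_add_lt_of_small {V : Type*} [Fintype V] (G : SimpleGraph V)
    (h1 : 1 < Fintype.card V) (h2 : Fintype.card V < 9) :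
    chiInj G + chiInj Gᶜ < 2 * (Fintype.card V : ℕ∞) := by
  have hle : ∀ H : SimpleGraph V, chiInj H ≤ Fintype.card V := fun _ ↦ chromaticNumber_le_card
  have hfin : ∀ H : SimpleGraph V, chiInj H ≠ ⊤ := fun H ↦ ne_top_of_le_ne_top (by simp) (hle H)
  rw [two_mul]
  rcases not_and_or.mp (not_commonNbrGraph_eq_top_and_compl G h1 h2) with hG | hGc
  · exact ENat.add_lt_add_of_lt_of_le (hfin _) (chiInj_lt_card_of_commonNbrGraph_ne_top hG)
      (hle _)
  · exact ENat.add_lt_add_of_le_of_lt (hfin _) (hle _)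
      (chiInj_lt_card_of_commonNbrGraph_ne_top hGc)
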